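/- arXiv:2302.01169 — 2 statements merged into one kernel-verified Lean document; each statement's English description precedes it below -/
import Mathlib

section
/- There is at most one order-matching clearing operator: if D₁, D₂ : E → L both satisfy, for i = 1,2, that X ∈ L if and only if Dᵢ(X) = X for all X ∈ E, and, writing Zᵢ(X) = X − Dᵢ(X), conditions (A1) Zᵢ(X) ∈ E, (A2) |Zᵢ(X)⁺| = |Zᵢ(X)⁻|, (A3) sup supp(Zᵢ(X)⁻) ≤ inf supp(Zᵢ(X)⁺), and (A4) sup supp(Zᵢ(X)⁻) ≤ inf supp(Dᵢ(X)⁻) and inf supp(Zᵢ(X)⁺) ≥ sup supp(Dᵢ(X)⁺) for all X ∈ E, then D₁ = D₂. -/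
open scoped BigOperators

namespace OB

/-- The space of order configurations `E = ℕ^d × ℕ^d`: buy side and sell side. -/
abbrev E (d : ℕ) := (Fin d → ℕ) × (Fin d → ℕ)

/-- Price support of a vector: the set of prices `j ∈ {1,…,d}` with a positive queue. -/
def supp {d : ℕ} (Z : Fin d → ℕ) : Finset ℕ :=
  (Finset.univ.filter fun j : Fin d => 0 < Z j).image fun j : Fin d => (j : ℕ) + 1

/-- `sup supp`, with the convention `sup ∅ = 0`. -/
def supSupp {d : ℕ} (Z : Fin d → ℕ) : ℕ := (supp Z).sup id

/-- `inf supp`, with the convention `inf ∅ = d+1`. -/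
def infSupp {d : ℕ} (Z : Fin d → ℕ) : ℕ :=
  if h : (supp Z).Nonempty then (supp Z).min' h else d + 1

/-- bid price `b(X) = sup supp(X⁺)`. -/
def bid {d : ℕ} (X : E d) : ℕ := supSupp X.1

/-- ask price `a(X) = inf supp(X⁻)`. -/
def ask {d : ℕ} (X : E d) : ℕ := infSupp X.2

/-- Admissible limit order book configurations: `a(X) > b(X)`. -/
def Lset (d : ℕ) : Set (E d) := {X | bid X < ask X}

/-- Entry of a vector at price `i` (prices run from 1 to d; 0 outside this range). -/
def ent {d : ℕ} (z : Fin d → ℕ) (i : ℕ) : ℕ :=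
  if h : 1 ≤ i ∧ i ≤ d then z ⟨i - 1, by omega⟩ else 0

/-- Standard basis vector at price `i`. -/
def e {d : ℕ} (i : ℕ) : Fin d → ℕ := fun j => if (j : ℕ) + 1 = i then 1 else 0

/-- `τ_i`: zero out all entries at prices `> i`. -/
def tauLow {d : ℕ} (i : ℤ) (z : Fin d → ℕ) : Fin d → ℕ :=
  fun j => if ((j : ℕ) + 1 : ℤ) ≤ i then z j else 0

/-- `τ^i`: zero out all entries at prices `< i`. -/
def tauHigh {d : ℕ} (i : ℤ) (z : Fin d → ℕ) : Fin d → ℕ :=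
  fun j => if i ≤ ((j : ℕ) + 1 : ℤ) then z j else 0

/-- `B_X(k) = Σ_{i ≥ k} X⁺_i`. -/
def BX {d : ℕ} (X : E d) (k : ℕ) : ℕ := ∑ j : Fin d, if k ≤ (j : ℕ) + 1 then X.1 j else 0

/-- `S_X(k) = Σ_{i ≤ k} X⁻_i`. -/
def SX {d : ℕ} (X : E d) (k : ℕ) : ℕ := ∑ j : Fin d, if (j : ℕ) + 1 ≤ k then X.2 j else 0

/-- `g_X(k) = S_X(k) − B_X(k)`. -/
def gX {d : ℕ} (X : E d) (k : ℕ) : ℤ := (SX X k : ℤ) - (BX X k : ℤ)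

/-- `p_A(X) = inf{k ∈ {1,…,d} : g_X(k) > 0}`, convention `inf ∅ = d+1`. -/
def pA {d : ℕ} (X : E d) : ℕ :=
  if h : ((Finset.Icc 1 d).filter fun k => 0 < gX X k).Nonempty
  then ((Finset.Icc 1 d).filter fun k => 0 < gX X k).min' h else d + 1

/-- `p_B(X) = sup{k ∈ {1,…,d} : g_X(k) < 0}`, convention `sup ∅ = 0`. -/
def pB {d : ℕ} (X : E d) : ℕ :=
  ((Finset.Icc 1 d).filter fun k => gX X k < 0).sup id

/-- `B_X⁻¹(z) = sup{i ∈ {1,…,d} : B_X(i) ≥ z}`, convention `sup ∅ = 0`. -/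
def Binv {d : ℕ} (X : E d) (z : ℕ) : ℕ :=
  ((Finset.Icc 1 d).filter fun i => z ≤ BX X i).sup id

/-- `S_X⁻¹(z) = inf{i ∈ {1,…,d} : S_X(i) ≥ z}`, convention `inf ∅ = d+1`. -/
def Sinv {d : ℕ} (X : E d) (z : ℕ) : ℕ :=
  if h : ((Finset.Icc 1 d).filter fun i => z ≤ SX X i).Nonempty
  then ((Finset.Icc 1 d).filter fun i => z ≤ SX X i).min' h else d + 1

/-- Buy side after order-matching clearing (Eq. (11) of the paper):
`C(X)⁺ = τ_{p_B}(X⁺)` if `g_X(p_B) ≤ −X⁺_{p_B}`, and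
`C(X)⁺ = τ_{p_B−1}(X⁺) − min{0, g_X(p_B)}·e_{p_B}` otherwise. -/
def clearPlus {d : ℕ} (X : E d) : Fin d → ℕ :=
  if gX X (pB X) ≤ -(ent X.1 (pB X) : ℤ) then tauLow (pB X : ℤ) X.1
  else fun j => tauLow ((pB X : ℤ) - 1) X.1 j + (max 0 (-(gX X (pB X)))).toNat * e (pB X) j

/-- Sell side after order-matching clearing (Eq. (12) of the paper):
`C(X)⁻ = τ^{p_A}(X⁻)` if `g_X(p_A) ≥ X⁻_{p_A}`, and
`C(X)⁻ = τ^{p_A+1}(X⁻) + max{0, g_X(p_A)}·e_{p_A}` otherwise. -/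
def clearMinus {d : ℕ} (X : E d) : Fin d → ℕ :=
  if (ent X.2 (pA X) : ℤ) ≤ gX X (pA X) then tauHigh (pA X : ℤ) X.2
  else fun j => tauHigh ((pA X : ℤ) + 1) X.2 j + (max 0 (gX X (pA X))).toNat * e (pA X) j

/-- The order-matching clearing operator. -/
def clear {d : ℕ} (X : E d) : E d := (clearPlus X, clearMinus X)

/-- Price support of an integer-valued vector. -/
def suppZ {d : ℕ} (W : Fin d → ℤ) : Finset ℕ :=
  (Finset.univ.filter fun j : Fin d => 0 < W j).image fun j : Fin d => (j : ℕ) + 1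

/-- `sup supp` of an integer-valued vector, convention `sup ∅ = 0`. -/
def supSuppZ {d : ℕ} (W : Fin d → ℤ) : ℕ := (suppZ W).sup id

/-- `inf supp` of an integer-valued vector, convention `inf ∅ = d+1`. -/
def infSuppZ {d : ℕ} (W : Fin d → ℤ) : ℕ :=
  if h : (suppZ W).Nonempty then (suppZ W).min' h else d + 1

/-- `D : E → E` is an order-matching clearing operator: it maps into `L`, its fixed
points are exactly `L`, and, with `Z(X) = X − D(X)` (computed in `ℤ^d × ℤ^d`), the
conditions (A1)–(A4) of Definition 2.2 hold. -/
def IsOrderMatchingClearing {d : ℕ} (D : E d → E d) : Prop :=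
  (∀ X : E d, D X ∈ Lset d) ∧
  (∀ X : E d, X ∈ Lset d ↔ D X = X) ∧
  (∀ X : E d,
    -- (A1): the executed orders `Z(X) = X − D(X)` have nonnegative entries
    (∀ j, (D X).1 j ≤ X.1 j ∧ (D X).2 j ≤ X.2 j) ∧
    -- (A2): `|Z(X)⁺| = |Z(X)⁻|`
    (∑ j, ((X.1 j : ℤ) - ((D X).1 j : ℤ))) = (∑ j, ((X.2 j : ℤ) - ((D X).2 j : ℤ))) ∧
    -- (A3): `sup supp(Z(X)⁻) ≤ inf supp(Z(X)⁺)`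
    supSuppZ (fun j => (X.2 j : ℤ) - ((D X).2 j : ℤ)) ≤
      infSuppZ (fun j => (X.1 j : ℤ) - ((D X).1 j : ℤ)) ∧
    -- (A4): `sup supp(Z(X)⁻) ≤ inf supp(D(X)⁻)` and `inf supp(Z(X)⁺) ≥ sup supp(D(X)⁺)`
    supSuppZ (fun j => (X.2 j : ℤ) - ((D X).2 j : ℤ)) ≤ infSupp (D X).2 ∧
    supSupp (D X).1 ≤ infSuppZ (fun j => (X.1 j : ℤ) - ((D X).1 j : ℤ)))


lemma mem_supp {d : ℕ} {Z : Fin d → ℕ} {j : Fin d} (h : 0 < Z j) :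
    (j : ℕ) + 1 ∈ supp Z := by
  simp only [supp, Finset.mem_image, Finset.mem_filter, Finset.mem_univ, true_and]
  exact ⟨j, h, rfl⟩

lemma mem_suppZ {d : ℕ} {W : Fin d → ℤ} {j : Fin d} (h : 0 < W j) :
    (j : ℕ) + 1 ∈ suppZ W := by
  simp only [suppZ, Finset.mem_image, Finset.mem_filter, Finset.mem_univ, true_and]
  exact ⟨j, h, rfl⟩

lemma le_supSupp {d : ℕ} {Z : Fin d → ℕ} {j : Fin d} (h : 0 < Z j) :
    (j : ℕ) + 1 ≤ supSupp Z :=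
  Finset.le_sup (f := id) (mem_supp h)

lemma infSupp_le {d : ℕ} {Z : Fin d → ℕ} {j : Fin d} (h : 0 < Z j) :
    infSupp Z ≤ (j : ℕ) + 1 := by
  have hm := mem_supp h
  rw [infSupp, dif_pos ⟨_, hm⟩]
  exact Finset.min'_le _ _ hm

lemma le_supSuppZ {d : ℕ} {W : Fin d → ℤ} {j : Fin d} (h : 0 < W j) :
    (j : ℕ) + 1 ≤ supSuppZ W :=
  Finset.le_sup (f := id) (mem_suppZ h)

lemma infSuppZ_le {d : ℕ} {W : Fin d → ℤ} {j : Fin d} (h : 0 < W j) :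
    infSuppZ W ≤ (j : ℕ) + 1 := by
  have hm := mem_suppZ h
  rw [infSuppZ, dif_pos ⟨_, hm⟩]
  exact Finset.min'_le _ _ hm

lemma plus_le {d : ℕ} {D : E d → E d} (hD : IsOrderMatchingClearing D) (X : E d)
    {q q' : Fin d} (hq : 0 < (X.1 q : ℤ) - (D X).1 q) (hq' : 0 < (D X).1 q') :
    (q' : ℕ) + 1 ≤ (q : ℕ) + 1 :=
  le_trans (le_trans (le_supSupp hq') (hD.2.2 X).2.2.2.2) (infSuppZ_le hq)

lemma minus_le {d : ℕ} {D : E d → E d} (hD : IsOrderMatchingClearing D) (X : E d)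
    {p p' : Fin d} (hp : 0 < (X.2 p : ℤ) - (D X).2 p) (hp' : 0 < (D X).2 p') :
    (p : ℕ) + 1 ≤ (p' : ℕ) + 1 :=
  le_trans (le_trans (le_supSuppZ hp) (hD.2.2 X).2.2.2.1) (infSupp_le hp')

lemma lemA {d : ℕ} {D₁ D₂ : E d → E d} (h₁ : IsOrderMatchingClearing D₁)
    (h₂ : IsOrderMatchingClearing D₂) (X : E d) {q p : Fin d}
    (hq : (D₂ X).1 q < (D₁ X).1 q) (hp : (D₂ X).2 p < (D₁ X).2 p) : False := by
  have hL := h₁.1 X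
  simp only [Lset, Set.mem_setOf_eq, bid, ask] at hL
  have hbid : (q : ℕ) + 1 ≤ supSupp (D₁ X).1 :=
    le_supSupp (lt_of_le_of_lt (Nat.zero_le _) hq)
  have hask : infSupp (D₁ X).2 ≤ (p : ℕ) + 1 :=
    infSupp_le (lt_of_le_of_lt (Nat.zero_le _) hp)
  have hZq : 0 < (X.1 q : ℤ) - (D₂ X).1 q := by
    have := ((h₁.2.2 X).1 q).1; omega
  have hZp : 0 < (X.2 p : ℤ) - (D₂ X).2 p := by
    have := ((h₁.2.2 X).1 p).2; omega
  have hA3 := (h₂.2.2 X).2.2.1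
  have h5 : (p : ℕ) + 1 ≤ supSuppZ (fun j => (X.2 j : ℤ) - (D₂ X).2 j) := le_supSuppZ hZp
  have h6 : infSuppZ (fun j => (X.1 j : ℤ) - (D₂ X).1 j) ≤ (q : ℕ) + 1 := infSuppZ_le hZq
  omega

lemma not_plus_lt {d : ℕ} {D₁ D₂ : E d → E d} (h₁ : IsOrderMatchingClearing D₁)
    (h₂ : IsOrderMatchingClearing D₂) (X : E d) (q : Fin d)
    (hq : (D₂ X).1 q < (D₁ X).1 q) : False := by
  have hle : ∀ j, (D₂ X).1 j ≤ (D₁ X).1 j := by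
    intro j
    by_contra hlt
    push_neg at hlt
    have hZ2q : 0 < (X.1 q : ℤ) - (D₂ X).1 q := by
      have := ((h₁.2.2 X).1 q).1; omega
    have h1 : (j : ℕ) + 1 ≤ (q : ℕ) + 1 :=
      plus_le h₂ X hZ2q (lt_of_le_of_lt (Nat.zero_le _) hlt)
    have hZ1j : 0 < (X.1 j : ℤ) - (D₁ X).1 j := by
      have := ((h₂.2.2 X).1 j).1; omega
    have h2 : (q : ℕ) + 1 ≤ (j : ℕ) + 1 :=
      plus_le h₁ X hZ1j (lt_of_le_of_lt (Nat.zero_le _) hq)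
    have hjq : j = q := Fin.ext (by omega)
    subst hjq; omega
  have hsumlt : ∑ j, (D₂ X).1 j < ∑ j, (D₁ X).1 j :=
    Finset.sum_lt_sum (fun j _ => hle j) ⟨q, Finset.mem_univ q, hq⟩
  have hs₁ := (h₁.2.2 X).2.1
  have hs₂ := (h₂.2.2 X).2.1
  simp only [Finset.sum_sub_distrib] at hs₁ hs₂
  have hcast : (∑ j, ((D₂ X).1 j : ℤ)) < ∑ j, ((D₁ X).1 j : ℤ) := by exact_mod_cast hsumlt
  have hminuslt : ∑ j, (D₂ X).2 j < ∑ j, (D₁ X).2 j := by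
    have : (∑ j, ((D₂ X).2 j : ℤ)) < ∑ j, ((D₁ X).2 j : ℤ) := by linarith
    exact_mod_cast this
  obtain ⟨p, -, hp⟩ : ∃ p ∈ Finset.univ, (D₂ X).2 p < (D₁ X).2 p := by
    by_contra hc
    push_neg at hc
    exact absurd (Finset.sum_le_sum hc) (not_le.mpr hminuslt)
  exact lemA h₁ h₂ X hq hp

lemma not_minus_lt {d : ℕ} {D₁ D₂ : E d → E d} (h₁ : IsOrderMatchingClearing D₁)
    (h₂ : IsOrderMatchingClearing D₂) (X : E d)
    (hsum : ∑ j, (D₁ X).1 j = ∑ j, (D₂ X).1 j) (p : Fin d)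
    (hp : (D₂ X).2 p < (D₁ X).2 p) : False := by
  have hs₁ := (h₁.2.2 X).2.1
  have hs₂ := (h₂.2.2 X).2.1
  simp only [Finset.sum_sub_distrib] at hs₁ hs₂
  have hcast : (∑ j, ((D₁ X).1 j : ℤ)) = ∑ j, ((D₂ X).1 j : ℤ) := by exact_mod_cast hsum
  have hmeq : ∑ j, (D₂ X).2 j = ∑ j, (D₁ X).2 j := by
    have : (∑ j, ((D₂ X).2 j : ℤ)) = ∑ j, ((D₁ X).2 j : ℤ) := by linarith
    exact_mod_cast this
  obtain ⟨p', -, hp'⟩ : ∃ p' ∈ Finset.univ, (D₁ X).2 p' < (D₂ X).2 p' := by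
    by_contra hc
    push_neg at hc
    have := Finset.sum_lt_sum (fun j _ => hc j (Finset.mem_univ j)) ⟨p, Finset.mem_univ p, hp⟩
    omega
  have hZ2p : 0 < (X.2 p : ℤ) - (D₂ X).2 p := by
    have := ((h₁.2.2 X).1 p).2; omega
  have h1 : (p : ℕ) + 1 ≤ (p' : ℕ) + 1 :=
    minus_le h₂ X hZ2p (lt_of_le_of_lt (Nat.zero_le _) hp')
  have hZ1p' : 0 < (X.2 p' : ℤ) - (D₁ X).2 p' := by
    have := ((h₂.2.2 X).1 p').2; omega
  have h2 : (p' : ℕ) + 1 ≤ (p : ℕ) + 1 :=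
    minus_le h₁ X hZ1p' (lt_of_le_of_lt (Nat.zero_le _) hp)
  have hpp : p = p' := Fin.ext (by omega)
  subst hpp; omega

/-- uniqueness of the order-matching clearing operator. -/
theorem orderMatchingClearing_unique (d : ℕ) (hd : 1 ≤ d) (D₁ D₂ : E d → E d)
    (h₁ : IsOrderMatchingClearing D₁) (h₂ : IsOrderMatchingClearing D₂) :
    D₁ = D₂ := by
  funext X
  have hplus : (D₁ X).1 = (D₂ X).1 := by
    funext j
    rcases lt_trichotomy ((D₁ X).1 j) ((D₂ X).1 j) with h | h | h
    · exact (not_plus_lt h₂ h₁ X j h).elim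
    · exact h
    · exact (not_plus_lt h₁ h₂ X j h).elim
  have hsum : ∑ j, (D₁ X).1 j = ∑ j, (D₂ X).1 j := by rw [hplus]
  have hminus : (D₁ X).2 = (D₂ X).2 := by
    funext p
    rcases lt_trichotomy ((D₁ X).2 p) ((D₂ X).2 p) with h | h | h
    · exact (not_minus_lt h₂ h₁ X hsum.symm p h).elim
    · exact h
    · exact (not_minus_lt h₁ h₂ X hsum p h).elim
  exact Prod.ext hplus hminus

end OB
end

section
/- For every X ∈ E with X⁺ ≠ 0 and X⁻ ≠ 0, one has X ∈ L if and only if p_B(X) = b(X) and p_A(X) = a(X). -/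
open scoped BigOperators

namespace OB

/-! Strictly below the ask `S_X` vanishes and strictly above the bid `B_X` vanishes, so `g_X ≤ 0`
below `a(X)` and `g_X ≥ 0` above `b(X)`. When `b(X) < a(X)`, the queues at `b(X)` and `a(X)` make
`g_X` negative at `b(X)` and positive at `a(X)`, which pins down `p_B(X)` and `p_A(X)`. Conversely,
`g_X` is monotone, which forces `p_B(X) < p_A(X)` for every `X`. -/

section

variable {d : ℕ}

open Finset

lemma mem_supp_iff {Z : Fin d → ℕ} {n : ℕ} :
    n ∈ supp Z ↔ ∃ j : Fin d, 0 < Z j ∧ (j : ℕ) + 1 = n := by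
  simp [supp]

lemma supp_nonempty {Z : Fin d → ℕ} (hZ : Z ≠ 0) : (supp Z).Nonempty := by
  obtain ⟨j, hj⟩ := Function.ne_iff.1 hZ
  exact ⟨(j : ℕ) + 1, mem_supp_iff.2 ⟨j, Nat.pos_of_ne_zero hj, rfl⟩⟩

lemma supSupp_mem_supp {Z : Fin d → ℕ} (hZ : Z ≠ 0) : supSupp Z ∈ supp Z := by
  obtain ⟨n, hn, hsup⟩ := exists_mem_eq_sup _ (supp_nonempty hZ) id
  rw [supSupp, hsup]
  exact hn

lemma infSupp_mem_supp {Z : Fin d → ℕ} (hZ : Z ≠ 0) : infSupp Z ∈ supp Z := by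
  rw [infSupp, dif_pos (supp_nonempty hZ)]
  exact min'_mem _ _

lemma eq_zero_of_supSupp_lt {Z : Fin d → ℕ} {j : Fin d} (hj : supSupp Z < (j : ℕ) + 1) :
    Z j = 0 := by
  by_contra hZj
  have hmem : (j : ℕ) + 1 ∈ supp Z := mem_supp_iff.2 ⟨j, Nat.pos_of_ne_zero hZj, rfl⟩
  exact hj.not_ge (le_sup (f := id) hmem)

lemma eq_zero_of_lt_infSupp {Z : Fin d → ℕ} {j : Fin d} (hj : (j : ℕ) + 1 < infSupp Z) :
    Z j = 0 := by
  by_contra hZj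
  have hmem : (j : ℕ) + 1 ∈ supp Z := mem_supp_iff.2 ⟨j, Nat.pos_of_ne_zero hZj, rfl⟩
  rw [infSupp, dif_pos ⟨_, hmem⟩] at hj
  exact hj.not_ge (min'_le _ _ hmem)

lemma bid_mem_Icc {X : E d} (hX : X.1 ≠ 0) : bid X ∈ Icc 1 d := by
  obtain ⟨j, -, hj⟩ := mem_supp_iff.1 (supSupp_mem_supp hX)
  rw [bid, ← hj, mem_Icc]
  omega

lemma ask_mem_Icc {X : E d} (hX : X.2 ≠ 0) : ask X ∈ Icc 1 d := by
  obtain ⟨j, -, hj⟩ := mem_supp_iff.1 (infSupp_mem_supp hX)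
  rw [ask, ← hj, mem_Icc]
  omega

lemma BX_eq_zero_of_bid_lt {X : E d} {k : ℕ} (hk : bid X < k) : BX X k = 0 :=
  sum_eq_zero fun j _ => by
    split_ifs with hj
    · exact eq_zero_of_supSupp_lt (hk.trans_le hj)
    · rfl

lemma SX_eq_zero_of_lt_ask {X : E d} {k : ℕ} (hk : k < ask X) : SX X k = 0 :=
  sum_eq_zero fun j _ => by
    split_ifs with hj
    · exact eq_zero_of_lt_infSupp (hj.trans_lt hk)
    · rfl

lemma BX_bid_pos {X : E d} (hX : X.1 ≠ 0) : 0 < BX X (bid X) := by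
  obtain ⟨j, hj, hjb⟩ := mem_supp_iff.1 (supSupp_mem_supp hX)
  have hle := single_le_sum (f := fun i : Fin d => if bid X ≤ (i : ℕ) + 1 then X.1 i else 0)
    (fun _ _ => Nat.zero_le _) (mem_univ j)
  rw [if_pos (by rw [bid, hjb])] at hle
  exact hj.trans_le hle

lemma SX_ask_pos {X : E d} (hX : X.2 ≠ 0) : 0 < SX X (ask X) := by
  obtain ⟨j, hj, hja⟩ := mem_supp_iff.1 (infSupp_mem_supp hX)
  have hle := single_le_sum (f := fun i : Fin d => if (i : ℕ) + 1 ≤ ask X then X.2 i else 0)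
    (fun _ _ => Nat.zero_le _) (mem_univ j)
  rw [if_pos (by rw [ask, hja])] at hle
  exact hj.trans_le hle

lemma SX_mono (X : E d) : Monotone (SX X) := fun _ _ hkm =>
  sum_le_sum fun j _ => by
    split_ifs with h₁ h₂ <;> omega

lemma BX_anti (X : E d) : Antitone (BX X) := fun _ _ hkm =>
  sum_le_sum fun j _ => by
    split_ifs with h₁ h₂ <;> omega

lemma gX_mono (X : E d) : Monotone (gX X) := fun _ _ hkm => by
  have hS := SX_mono X hkm
  have hB := BX_anti X hkm
  unfold gX
  omega

lemma gX_bid_neg {X : E d} (hX : X.1 ≠ 0) (hL : bid X < ask X) : gX X (bid X) < 0 := by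
  have hS := SX_eq_zero_of_lt_ask hL
  have hB := BX_bid_pos hX
  unfold gX
  omega

lemma gX_ask_pos {X : E d} (hX : X.2 ≠ 0) (hL : bid X < ask X) : 0 < gX X (ask X) := by
  have hB := BX_eq_zero_of_bid_lt hL
  have hS := SX_ask_pos hX
  unfold gX
  omega

lemma gX_nonneg_of_bid_lt {X : E d} {k : ℕ} (hk : bid X < k) : 0 ≤ gX X k := by
  rw [gX, BX_eq_zero_of_bid_lt hk]
  omega

lemma gX_nonpos_of_lt_ask {X : E d} {k : ℕ} (hk : k < ask X) : gX X k ≤ 0 := by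
  rw [gX, SX_eq_zero_of_lt_ask hk]
  omega

lemma pB_eq_of_forall_lt {X : E d} {k : ℕ} (hk : k ∈ Icc 1 d) (hneg : gX X k < 0)
    (hnonneg : ∀ m, k < m → 0 ≤ gX X m) : pB X = k :=
  le_antisymm
    (Finset.sup_le fun m hm => not_lt.1 fun hkm => (hnonneg m hkm).not_gt (mem_filter.1 hm).2)
    (le_sup (f := id) (mem_filter.2 ⟨hk, hneg⟩))

lemma pA_eq_of_forall_lt {X : E d} {k : ℕ} (hk : k ∈ Icc 1 d) (hpos : 0 < gX X k)
    (hnonpos : ∀ m, m < k → gX X m ≤ 0) : pA X = k := by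
  have hmem : k ∈ (Icc 1 d).filter fun m => 0 < gX X m := mem_filter.2 ⟨hk, hpos⟩
  rw [pA, dif_pos ⟨k, hmem⟩]
  exact le_antisymm (min'_le _ _ hmem)
    (le_min' _ _ _ fun m hm => not_lt.1 fun hmk => (hnonpos m hmk).not_gt (mem_filter.1 hm).2)

lemma pB_lt_pA (X : E d) : pB X < pA X := by
  unfold pA
  split_ifs with hU
  · obtain ⟨hIcc, hpos⟩ := mem_filter.1 (min'_mem _ hU)
    refine (Finset.sup_lt_iff (mem_Icc.1 hIcc).1).2 fun k hk => ?_
    exact (gX_mono X).reflect_lt ((mem_filter.1 hk).2.trans hpos)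
  · exact Nat.lt_succ_of_le (Finset.sup_le fun k hk => (mem_Icc.1 (mem_filter.1 hk).1).2)

end

theorem mem_Lset_iff_pB_pA_general (d : ℕ) (X : E d)
    (hplus : X.1 ≠ 0) (hminus : X.2 ≠ 0) :
    X ∈ Lset d ↔ (pB X = bid X ∧ pA X = ask X) :=
  ⟨fun hL => ⟨pB_eq_of_forall_lt (bid_mem_Icc hplus) (gX_bid_neg hplus hL)
      fun _ => gX_nonneg_of_bid_lt,
    pA_eq_of_forall_lt (ask_mem_Icc hminus) (gX_ask_pos hminus hL) fun _ => gX_nonpos_of_lt_ask⟩,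
  fun ⟨hB, hA⟩ => (hB ▸ hA ▸ pB_lt_pA X : bid X < ask X)⟩

/-- Eq. (10) of Cont–Degond–Xuan: for configurations with nonempty
buy and sell sides, `X ∈ L` iff `p_B(X) = b(X)` and `p_A(X) = a(X)`. -/
theorem mem_Lset_iff_pB_pA (d : ℕ) (hd : 1 ≤ d) (X : E d)
    (hplus : X.1 ≠ 0) (hminus : X.2 ≠ 0) :
    X ∈ Lset d ↔ (pB X = bid X ∧ pA X = ask X) :=
  mem_Lset_iff_pB_pA_general d X hplus hminus

end OB
end
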